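/- Let n = 2^m with m ≥ 2. A set C ⊆ X^n is an (n, 5, n−1; 2^(n-1)/n)_3 code (i.e., |C| = 2^(n-1)/n and distinct words of C are at Hamming distance at least 5) if and only if the following two conditions hold: (1) both e(C) and o(C) are binary (n, 2^(n-1)/n, 4) codes; (2) whenever x1, x2 ∈ e(C) and y1, y2 ∈ o(C) satisfy d(x1,y1) = d(x2,y2) = 1 and d(x1,x2) = 4, the coordinatewise mod-2 differences satisfy x1 − x2 ≠ y1 − y2. -/
import Mathlib


/-- A ternary word has exactly one coordinate equal to 0 (the `*` symbol). -/
def exactlyOneStar {n : ℕ} (x : Fin n → Fin 3) : Prop :=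
  (Finset.univ.filter (fun i => x i = 0)).card = 1

/-- The binary word (over `ZMod 2`) associated to a ternary word `x`, where the
value `1` of `x` represents the binary `0`, the value `2` represents the binary
`1`, and the coordinates where `x` is `0` (the `*`) get the value `v`. -/
def binPart {n : ℕ} (x : Fin n → Fin 3) (v : ZMod 2) : Fin n → ZMod 2 :=
  fun i => if x i = 0 then v else if x i = 2 then 1 else 0

/-- The (Hamming) weight of a binary word: the number of 1s. -/
def wt {n : ℕ} (y : Fin n → ZMod 2) : ℕ :=
  (Finset.univ.filter (fun i => y i = 1)).card

/-- The even-weight binary word `e(x)` determined by `x ∈ Xⁿ`. -/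
def eWord {n : ℕ} (x : Fin n → Fin 3) : Fin n → ZMod 2 :=
  if wt (binPart x 0) % 2 = 0 then binPart x 0 else binPart x 1

/-- The odd-weight binary word `o(x)` determined by `x ∈ Xⁿ`. -/
def oWord {n : ℕ} (x : Fin n → Fin 3) : Fin n → ZMod 2 :=
  if wt (binPart x 0) % 2 = 0 then binPart x 1 else binPart x 0

namespace CodeAux
variable {n : ℕ}

lemma fin3_inj : ∀ p q : Fin 3, p ≠ 0 → q ≠ 0 →
    ((if p = 2 then (1:ZMod 2) else 0) = (if q = 2 then (1:ZMod 2) else 0) ↔ p = q) := by decide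

lemma star_spec {x : Fin n → Fin 3} (hx : exactlyOneStar x) :
    ∃ j, ∀ i, x i = 0 ↔ i = j := by
  obtain ⟨j, hj⟩ := Finset.card_eq_one.mp hx
  refine ⟨j, fun i => ?_⟩
  constructor
  · intro h
    have : i ∈ Finset.univ.filter (fun i => x i = 0) := by simp [h]
    rw [hj] at this; simpa using this
  · rintro rfl
    have : i ∈ Finset.univ.filter (fun i => x i = 0) := by
      rw [hj]; exact Finset.mem_singleton_self i
    simpa using this

lemma eWord_offstar {x : Fin n → Fin 3} {i} (h : x i ≠ 0) :
    eWord x i = if x i = 2 then 1 else 0 := by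
  unfold eWord; split <;> simp [binPart, h]

lemma oWord_offstar {x : Fin n → Fin 3} {i} (h : x i ≠ 0) :
    oWord x i = if x i = 2 then 1 else 0 := by
  unfold oWord; split <;> simp [binPart, h]

lemma oWord_eWord_star {x : Fin n → Fin 3} {i} (h : x i = 0) :
    oWord x i = eWord x i + 1 := by
  unfold eWord oWord; split <;> simp [binPart, h] <;> decide

lemma oWord_eq_eWord_add (x : Fin n → Fin 3) (i : Fin n) :
    oWord x i = eWord x i + (if x i = 0 then 1 else 0) := by
  by_cases h : x i = 0
  · simp [h, oWord_eWord_star h]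
  · simp [h, eWord_offstar h, oWord_offstar h]

lemma hammingDist_eWord_oWord {x : Fin n → Fin 3} (hx : exactlyOneStar x) :
    hammingDist (eWord x) (oWord x) = 1 := by
  obtain ⟨j, hj⟩ := star_spec hx
  have : (Finset.univ.filter fun i => eWord x i ≠ oWord x i) = {j} := by
    ext i
    simp only [Finset.mem_filter, Finset.mem_univ, true_and, Finset.mem_singleton]
    rw [oWord_eq_eWord_add, ← hj i]
    by_cases h : x i = 0 <;> simp [h] <;> decide
  simp [hammingDist, this]

lemma zmod2_ite_eq : ∀ a : ZMod 2, (if a = 1 then (1:ZMod 2) else 0) = a := by decide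

lemma wt_cast (u : Fin n → ZMod 2) : ((wt u : ℕ) : ZMod 2) = ∑ i, u i := by
  unfold wt
  rw [Finset.card_filter]
  push_cast
  refine Finset.sum_congr rfl fun i _ => ?_
  rw [← zmod2_ite_eq (u i)]
  split <;> simp_all

lemma zmod2_ne_ite : ∀ a b : ZMod 2, (if a ≠ b then (1:ZMod 2) else 0) = a - b := by decide

lemma hammingDist_cast (u v : Fin n → ZMod 2) :
    ((hammingDist u v : ℕ) : ZMod 2) = ((wt u : ℕ) : ZMod 2) + ((wt v : ℕ) : ZMod 2) := by
  have : hammingDist u v = (Finset.univ.filter fun i => u i ≠ v i).card := rfl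
  rw [this, Finset.card_filter]
  push_cast
  rw [Finset.sum_congr rfl fun i _ => zmod2_ne_ite (u i) (v i), Finset.sum_sub_distrib,
    wt_cast, wt_cast, sub_eq_add_neg, CharTwo.neg_eq]

lemma bin0_eq_one : ∀ p : Fin 3,
    ((if p = 0 then (0:ZMod 2) else if p = 2 then 1 else 0) = 1) ↔ p = 2 := by decide

lemma bin1_eq_one : ∀ p : Fin 3,
    ((if p = 0 then (1:ZMod 2) else if p = 2 then 1 else 0) = 1) ↔ (p = 0 ∨ p = 2) := by decide

lemma wt_binPart_one {x : Fin n → Fin 3} (hx : exactlyOneStar x) :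
    wt (binPart x 1) = wt (binPart x 0) + 1 := by
  obtain ⟨j, hj⟩ := star_spec hx
  have h0 : (Finset.univ.filter fun i => binPart x 0 i = 1) =
      Finset.univ.filter fun i => x i = 2 := by
    ext i
    simp only [Finset.mem_filter, Finset.mem_univ, true_and]
    exact bin0_eq_one (x i)
  have h1 : (Finset.univ.filter fun i => binPart x 1 i = 1) =
      insert j (Finset.univ.filter fun i => x i = 2) := by
    ext i
    simp only [Finset.mem_filter, Finset.mem_univ, true_and, Finset.mem_insert]
    rw [show (binPart x 1 i = 1) ↔ (x i = 0 ∨ x i = 2) from bin1_eq_one (x i), hj i]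
  have hjnot : j ∉ Finset.univ.filter fun i => x i = 2 := by
    simp only [Finset.mem_filter, Finset.mem_univ, true_and]
    rw [(hj j).mpr rfl]; decide
  unfold wt
  rw [h0, h1, Finset.card_insert_of_notMem hjnot]

lemma wt_eWord_even {x : Fin n → Fin 3} (hx : exactlyOneStar x) :
    wt (eWord x) % 2 = 0 := by
  unfold eWord
  by_cases h : wt (binPart x 0) % 2 = 0
  · rw [if_pos h]; exact h
  · rw [if_neg h, wt_binPart_one hx]; omega

lemma wt_oWord_odd {x : Fin n → Fin 3} (hx : exactlyOneStar x) :
    wt (oWord x) % 2 = 1 := by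
  unfold oWord
  by_cases h : wt (binPart x 0) % 2 = 0
  · rw [if_pos h, wt_binPart_one hx]; omega
  · rw [if_neg h]; omega

lemma cast_zmod2_mod (d : ℕ) : (d : ZMod 2) = ((d % 2 : ℕ) : ZMod 2) := by
  conv_lhs => rw [← Nat.div_add_mod d 2]
  push_cast
  rw [show (2:ZMod 2) = 0 by decide]
  ring

lemma dist_even {u v : Fin n → ZMod 2} (hu : wt u % 2 = 0) (hv : wt v % 2 = 0) :
    hammingDist u v % 2 = 0 := by
  have h := hammingDist_cast u v
  rw [cast_zmod2_mod (wt u), cast_zmod2_mod (wt v), hu, hv] at h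
  simp at h
  rw [cast_zmod2_mod] at h
  have : hammingDist u v % 2 = 0 ∨ hammingDist u v % 2 = 1 := by omega
  rcases this with h2 | h2
  · exact h2
  · rw [h2] at h; exact absurd h (by decide)

lemma zmod2_add_one {a b : ZMod 2} (h : a ≠ b) : a + 1 = b := by revert h; revert a b; decide

lemma hammingDist_filter (x y : Fin n → ZMod 2) :
    hammingDist x y = (Finset.univ.filter fun i => x i ≠ y i).card := rfl

lemma hammingDist_filter3 (x y : Fin n → Fin 3) :
    hammingDist x y = (Finset.univ.filter fun i => x i ≠ y i).card := rfl

section DistLemmas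

variable {a b : Fin n → Fin 3} {j k : Fin n}
variable {u v : Fin n → ZMod 2}

lemma ptwise (hj : ∀ i, a i = 0 ↔ i = j) (hk : ∀ i, b i = 0 ↔ i = k)
    (hu : ∀ i, i ≠ j → u i = if a i = 2 then 1 else 0)
    (hv : ∀ i, i ≠ k → v i = if b i = 2 then 1 else 0)
    {i : Fin n} (hi1 : i ≠ j) (hi2 : i ≠ k) : (u i ≠ v i ↔ a i ≠ b i) := by
  rw [hu i hi1, hv i hi2]
  have ha : a i ≠ 0 := fun h => hi1 ((hj i).mp h)
  have hb : b i ≠ 0 := fun h => hi2 ((hk i).mp h)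
  exact not_congr (fin3_inj _ _ ha hb)

lemma dist_ge_general (hj : ∀ i, a i = 0 ↔ i = j) (hk : ∀ i, b i = 0 ↔ i = k)
    (hu : ∀ i, i ≠ j → u i = if a i = 2 then 1 else 0)
    (hv : ∀ i, i ≠ k → v i = if b i = 2 then 1 else 0) :
    hammingDist a b ≤ hammingDist u v + 2 := by
  have hsub : (Finset.univ.filter fun i => a i ≠ b i) ⊆
      (Finset.univ.filter fun i => u i ≠ v i) ∪ {j, k} := by
    intro i hi
    simp only [Finset.mem_filter, Finset.mem_univ, true_and] at hi
    by_cases h1 : i = j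
    · simp [Finset.mem_union, h1]
    by_cases h2 : i = k
    · simp [Finset.mem_union, h2]
    have := (ptwise hj hk hu hv h1 h2).mpr hi
    simp [Finset.mem_union, Finset.mem_filter, this]
  rw [hammingDist_filter, hammingDist_filter3]
  calc (Finset.univ.filter fun i => a i ≠ b i).card
      ≤ ((Finset.univ.filter fun i => u i ≠ v i) ∪ {j, k}).card := Finset.card_le_card hsub
    _ ≤ (Finset.univ.filter fun i => u i ≠ v i).card + ({j, k} : Finset (Fin n)).card :=
        Finset.card_union_le _ _
    _ ≤ _ := by
        have : ({j, k} : Finset (Fin n)).card ≤ 2 :=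
          le_trans (Finset.card_insert_le _ _) (by simp)
        omega

lemma dist_le_same (hj : ∀ i, a i = 0 ↔ i = j) (hk : ∀ i, b i = 0 ↔ i = j)
    (hu : ∀ i, i ≠ j → u i = if a i = 2 then 1 else 0)
    (hv : ∀ i, i ≠ j → v i = if b i = 2 then 1 else 0) :
    hammingDist u v ≤ hammingDist a b + 1 := by
  have hsub : (Finset.univ.filter fun i => u i ≠ v i) ⊆
      insert j (Finset.univ.filter fun i => a i ≠ b i) := by
    intro i hi
    simp only [Finset.mem_filter, Finset.mem_univ, true_and] at hi
    by_cases h1 : i = j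
    · simp [h1]
    have := (ptwise hj hk hu hv h1 h1).mp hi
    simp [Finset.mem_insert, this]
  rw [hammingDist_filter, hammingDist_filter3]
  calc (Finset.univ.filter fun i => u i ≠ v i).card
      ≤ (insert j (Finset.univ.filter fun i => a i ≠ b i)).card := Finset.card_le_card hsub
    _ ≤ _ := Finset.card_insert_le _ _

lemma dist_ge_same (hj : ∀ i, a i = 0 ↔ i = j) (hk : ∀ i, b i = 0 ↔ i = j)
    (hu : ∀ i, i ≠ j → u i = if a i = 2 then 1 else 0)
    (hv : ∀ i, i ≠ j → v i = if b i = 2 then 1 else 0) :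
    hammingDist a b ≤ hammingDist u v := by
  have hsub : (Finset.univ.filter fun i => a i ≠ b i) ⊆
      (Finset.univ.filter fun i => u i ≠ v i) := by
    intro i hi
    simp only [Finset.mem_filter, Finset.mem_univ, true_and] at hi ⊢
    have h1 : i ≠ j := by
      rintro rfl
      exact hi (((hj i).mpr rfl).trans ((hk i).mpr rfl).symm)
    exact (ptwise hj hk hu hv h1 h1).mpr hi
  exact Finset.card_le_card hsub

lemma diff_subset_of_ne (hjk : j ≠ k) (hj : ∀ i, a i = 0 ↔ i = j) (hk : ∀ i, b i = 0 ↔ i = k)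
    (hu : ∀ i, i ≠ j → u i = if a i = 2 then 1 else 0)
    (hv : ∀ i, i ≠ k → v i = if b i = 2 then 1 else 0) :
    (Finset.univ.filter fun i => u i ≠ v i) ⊆ (Finset.univ.filter fun i => a i ≠ b i) := by
  intro i hi
  simp only [Finset.mem_filter, Finset.mem_univ, true_and] at hi ⊢
  by_cases h1 : i = j
  · subst h1
    have ha : a i = 0 := (hj i).mpr rfl
    have hb : b i ≠ 0 := fun h => hjk ((hk i).mp h)
    rw [ha]; exact fun h => hb h.symm
  by_cases h2 : i = k
  · subst h2
    have hb : b i = 0 := (hk i).mpr rfl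
    have ha : a i ≠ 0 := fun h => h1 ((hj i).mp h)
    rw [hb]; exact ha
  exact (ptwise hj hk hu hv h1 h2).mp hi

end DistLemmas

lemma dist_mod (u v : Fin n → ZMod 2) :
    hammingDist u v % 2 = (wt u + wt v) % 2 := by
  have h := hammingDist_cast u v
  rw [← Nat.cast_add] at h
  exact (ZMod.natCast_eq_natCast_iff _ _ _).mp h

lemma eW_sat {a : Fin n → Fin 3} {j} (hj : ∀ i, a i = 0 ↔ i = j) :
    ∀ i, i ≠ j → eWord a i = if a i = 2 then 1 else 0 :=
  fun i hi => eWord_offstar (fun h => hi ((hj i).mp h))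

lemma oW_sat {a : Fin n → Fin 3} {j} (hj : ∀ i, a i = 0 ↔ i = j) :
    ∀ i, i ≠ j → oWord a i = if a i = 2 then 1 else 0 :=
  fun i hi => oWord_offstar (fun h => hi ((hj i).mp h))

lemma zmod2_add_one_ne : ∀ a : ZMod 2, a + 1 ≠ a := by decide

end CodeAux

open CodeAux

/-- `C ⊆ Xⁿ`, `n = 2^m`, is an `(n, 5, n-1; 2^(n-1)/n)₃` code if and only if
both `e(C)` and `o(C)` are binary `(n, 2^(n-1)/n, 4)` codes and whenever
`x1, x2 ∈ e(C)`, `y1, y2 ∈ o(C)` satisfy `d(x1,y1) = d(x2,y2) = 1` and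
`d(x1,x2) = 4`, we have `x1 - x2 ≠ y1 - y2`. -/
theorem code_iff_conditions (m n : ℕ) (hm : 2 ≤ m) (hn : n = 2 ^ m)
    (C : Finset (Fin n → Fin 3)) (hC : ∀ x ∈ C, exactlyOneStar x) :
    (C.card = 2 ^ (n - 1) / n ∧
      (∀ x ∈ C, ∀ y ∈ C, x ≠ y → 5 ≤ hammingDist x y)) ↔
    (((C.image eWord).card = 2 ^ (n - 1) / n ∧
      (∀ x ∈ C.image eWord, ∀ y ∈ C.image eWord, x ≠ y → 4 ≤ hammingDist x y) ∧
      (C.image oWord).card = 2 ^ (n - 1) / n ∧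
      (∀ x ∈ C.image oWord, ∀ y ∈ C.image oWord, x ≠ y → 4 ≤ hammingDist x y)) ∧
     (∀ x1 ∈ C.image eWord, ∀ x2 ∈ C.image eWord,
      ∀ y1 ∈ C.image oWord, ∀ y2 ∈ C.image oWord,
        hammingDist x1 y1 = 1 → hammingDist x2 y2 = 1 →
        hammingDist x1 x2 = 4 → x1 - x2 ≠ y1 - y2)) := by
  constructor
  · rintro ⟨hcard, hd⟩
    have einj : Set.InjOn eWord (C : Set (Fin n → Fin 3)) := by
      intro a ha' b hb' hab
      by_contra hne
      have h5 := hd a ha' b hb' hne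
      obtain ⟨j, hj⟩ := star_spec (hC a ha')
      obtain ⟨k, hk⟩ := star_spec (hC b hb')
      have hle := dist_ge_general hj hk (eW_sat hj) (eW_sat hk)
      rw [hab, hammingDist_self] at hle
      omega
    have oinj : Set.InjOn oWord (C : Set (Fin n → Fin 3)) := by
      intro a ha' b hb' hab
      by_contra hne
      have h5 := hd a ha' b hb' hne
      obtain ⟨j, hj⟩ := star_spec (hC a ha')
      obtain ⟨k, hk⟩ := star_spec (hC b hb')
      have hle := dist_ge_general hj hk (oW_sat hj) (oW_sat hk)
      rw [hab, hammingDist_self] at hle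
      omega
    refine ⟨⟨?_, ?_, ?_, ?_⟩, ?_⟩
    · rw [Finset.card_image_of_injOn einj, hcard]
    · intro x hx y hy hxy
      obtain ⟨a, ha', rfl⟩ := Finset.mem_image.mp hx
      obtain ⟨b, hb', rfl⟩ := Finset.mem_image.mp hy
      have hab : a ≠ b := fun h => hxy (by rw [h])
      have h5 := hd a ha' b hb' hab
      obtain ⟨j, hj⟩ := star_spec (hC a ha')
      obtain ⟨k, hk⟩ := star_spec (hC b hb')
      have hle := dist_ge_general hj hk (eW_sat hj) (eW_sat hk)
      have hmod := dist_mod (eWord a) (eWord b)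
      have h1 := wt_eWord_even (hC a ha')
      have h2 := wt_eWord_even (hC b hb')
      omega
    · rw [Finset.card_image_of_injOn oinj, hcard]
    · intro x hx y hy hxy
      obtain ⟨a, ha', rfl⟩ := Finset.mem_image.mp hx
      obtain ⟨b, hb', rfl⟩ := Finset.mem_image.mp hy
      have hab : a ≠ b := fun h => hxy (by rw [h])
      have h5 := hd a ha' b hb' hab
      obtain ⟨j, hj⟩ := star_spec (hC a ha')
      obtain ⟨k, hk⟩ := star_spec (hC b hb')
      have hle := dist_ge_general hj hk (oW_sat hj) (oW_sat hk)
      have hmod := dist_mod (oWord a) (oWord b)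
      have h1 := wt_oWord_odd (hC a ha')
      have h2 := wt_oWord_odd (hC b hb')
      omega
    · intro x1 hx1 x2 hx2 y1 hy1 y2 hy2 h11 h21 h4
      obtain ⟨a1, ha1, rfl⟩ := Finset.mem_image.mp hx1
      obtain ⟨a2, ha2, rfl⟩ := Finset.mem_image.mp hx2
      obtain ⟨b1, hb1, rfl⟩ := Finset.mem_image.mp hy1
      obtain ⟨b2, hb2, rfl⟩ := Finset.mem_image.mp hy2
      have key : ∀ a ∈ C, ∀ b ∈ C, hammingDist (eWord a) (oWord b) = 1 → oWord b = oWord a := by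
        intro a ha' b hb' h1
        by_cases hab : a = b
        · rw [hab]
        · exfalso
          have h5 := hd a ha' b hb' hab
          obtain ⟨j, hj⟩ := star_spec (hC a ha')
          obtain ⟨k, hk⟩ := star_spec (hC b hb')
          have hle := dist_ge_general hj hk (eW_sat hj) (oW_sat hk)
          omega
      rw [key a1 ha1 b1 hb1 h11, key a2 ha2 b2 hb2 h21]
      intro heq
      have ha12 : a1 ≠ a2 := by
        rintro rfl
        rw [hammingDist_self] at h4
        omega
      have h5 := hd a1 ha1 a2 ha2 ha12
      obtain ⟨j1, hj1⟩ := star_spec (hC a1 ha1)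
      obtain ⟨j2, hj2⟩ := star_spec (hC a2 ha2)
      have hptw := congrFun heq j1
      simp only [Pi.sub_apply] at hptw
      rw [oWord_eq_eWord_add a1 j1, oWord_eq_eWord_add a2 j1,
        if_pos ((hj1 j1).mpr rfl)] at hptw
      by_cases h2' : a2 j1 = 0
      · have hj12 : j1 = j2 := (hj2 j1).mp h2'
        subst hj12
        have hle := dist_ge_same hj1 hj2 (eW_sat hj1) (eW_sat hj2)
        omega
      · rw [if_neg h2', add_zero] at hptw
        have := sub_left_inj.mp hptw
        exact zmod2_add_one_ne (eWord a1 j1) this.symm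
  · rintro ⟨⟨hecard, hedist, _, hodist⟩, hcond⟩
    have einj : ∀ a ∈ C, ∀ b ∈ C, eWord a = eWord b → a = b := by
      intro a ha' b hb' hab
      obtain ⟨j, hj⟩ := star_spec (hC a ha')
      obtain ⟨k, hk⟩ := star_spec (hC b hb')
      by_cases hjk : j = k
      · subst hjk
        funext i
        by_cases hij : i = j
        · rw [hij, (hj j).mpr rfl, (hk j).mpr rfl]
        · have h1 := eW_sat hj i hij
          have h2 := eW_sat hk i hij
          have h3 := congrFun hab i
          rw [h1, h2] at h3
          exact (fin3_inj _ _ (fun h => hij ((hj i).mp h)) (fun h => hij ((hk i).mp h))).mp h3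
      · exfalso
        have hbj : b j ≠ 0 := fun h => hjk ((hk j).mp h)
        have hak : a k ≠ 0 := fun h => hjk ((hj k).mp h).symm
        have hoj : oWord a j ≠ oWord b j := by
          rw [oWord_eWord_star ((hj j).mpr rfl), oWord_offstar hbj, ← eWord_offstar hbj, ← hab]
          exact zmod2_add_one_ne (eWord a j)
        have hok : oWord a k ≠ oWord b k := by
          rw [oWord_eWord_star ((hk k).mpr rfl), oWord_offstar hak, ← eWord_offstar hak, hab]
          exact fun h => zmod2_add_one_ne (eWord b k) h.symm
        have hdiff : (Finset.univ.filter fun i => oWord a i ≠ oWord b i) = {j, k} := by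
          ext i
          simp only [Finset.mem_filter, Finset.mem_univ, true_and, Finset.mem_insert,
            Finset.mem_singleton]
          by_cases hij : i = j
          · subst hij; simp [hoj]
          by_cases hik : i = k
          · subst hik; simp [hok]
          · have h1 := oW_sat hj i hij
            have h2 := oW_sat hk i hik
            have h3 : eWord a i = eWord b i := congrFun hab i
            rw [eW_sat hj i hij, eW_sat hk i hik] at h3
            simp only [hij, hik, or_self, iff_false, not_not]
            rw [h1, h2, h3]
        have hol : hammingDist (oWord a) (oWord b) = 2 := by
          rw [hammingDist_filter, hdiff, Finset.card_pair hjk]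
        have := hodist (oWord a) (Finset.mem_image_of_mem _ ha') (oWord b)
          (Finset.mem_image_of_mem _ hb') (fun h => hoj (congrFun h j))
        omega
    have hdist5 : ∀ x ∈ C, ∀ y ∈ C, x ≠ y → 5 ≤ hammingDist x y := by
      intro a ha' b hb' hab
      by_contra hcon
      push_neg at hcon
      obtain ⟨j, hj⟩ := star_spec (hC a ha')
      obtain ⟨k, hk⟩ := star_spec (hC b hb')
      have heab : eWord a ≠ eWord b := fun h => hab (einj a ha' b hb' h)
      have he4 : 4 ≤ hammingDist (eWord a) (eWord b) :=
        hedist _ (Finset.mem_image_of_mem _ ha') _ (Finset.mem_image_of_mem _ hb') heab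
      by_cases hjk : j = k
      · subst hjk
        have hle := dist_le_same hj hk (eW_sat hj) (eW_sat hk)
        have hmod := dist_mod (eWord a) (eWord b)
        have h1 := wt_eWord_even (hC a ha')
        have h2 := wt_eWord_even (hC b hb')
        have he : hammingDist (eWord a) (eWord b) = 4 := by omega
        refine hcond (eWord a) (Finset.mem_image_of_mem _ ha')
          (eWord b) (Finset.mem_image_of_mem _ hb')
          (oWord a) (Finset.mem_image_of_mem _ ha')
          (oWord b) (Finset.mem_image_of_mem _ hb')
          (hammingDist_eWord_oWord (hC a ha')) (hammingDist_eWord_oWord (hC b hb')) he ?_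
        funext i
        simp only [Pi.sub_apply]
        rw [oWord_eq_eWord_add, oWord_eq_eWord_add]
        have hiff : a i = 0 ↔ b i = 0 := (hj i).trans (hk i).symm
        by_cases h0 : a i = 0
        · rw [if_pos h0, if_pos (hiff.mp h0)]; ring
        · rw [if_neg h0, if_neg (fun h => h0 (hiff.mpr h))]; ring
      · -- different stars
        have hbj : b j ≠ 0 := fun h => hjk ((hk j).mp h)
        have hak : a k ≠ 0 := fun h => hjk ((hj k).mp h).symm
        have hsub := diff_subset_of_ne hjk hj hk (eW_sat hj) (eW_sat hk)
        have hDle : (Finset.univ.filter fun i => a i ≠ b i).card ≤ 4 := by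
          rw [← hammingDist_filter3]; omega
        have he4' : 4 ≤ (Finset.univ.filter fun i => eWord a i ≠ eWord b i).card := by
          rw [← hammingDist_filter]; omega
        have hED := Finset.eq_of_subset_of_card_le hsub (by omega)
        have hjk_sub : ({j, k} : Finset (Fin n)) ⊆
            Finset.univ.filter fun i => a i ≠ b i := by
          intro i hi
          simp only [Finset.mem_insert, Finset.mem_singleton] at hi
          simp only [Finset.mem_filter, Finset.mem_univ, true_and]
          rcases hi with rfl | rfl
          · rw [(hj i).mpr rfl]; exact fun h => hbj h.symm
          · rw [(hk i).mpr rfl]; exact hak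
        have hej : eWord a j ≠ eWord b j := by
          have : j ∈ Finset.univ.filter fun i => eWord a i ≠ eWord b i := by
            rw [hED]; exact hjk_sub (by simp)
          simpa using this
        have hek : eWord a k ≠ eWord b k := by
          have : k ∈ Finset.univ.filter fun i => eWord a i ≠ eWord b i := by
            rw [hED]; exact hjk_sub (by simp)
          simpa using this
        -- oWords agree at j and k
        have hoj : oWord a j = oWord b j := by
          rw [oWord_eWord_star ((hj j).mpr rfl), oWord_offstar hbj, ← eWord_offstar hbj]
          exact zmod2_add_one hej
        have hok : oWord a k = oWord b k := by
          rw [oWord_offstar hak, ← eWord_offstar hak, oWord_eWord_star ((hk k).mpr rfl)]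
          exact (zmod2_add_one hek.symm).symm
        have hOsub : (Finset.univ.filter fun i => oWord a i ≠ oWord b i) ⊆
            (Finset.univ.filter fun i => a i ≠ b i) \ {j, k} := by
          intro i hi
          rw [Finset.mem_sdiff]
          refine ⟨diff_subset_of_ne hjk hj hk (oW_sat hj) (oW_sat hk) hi, ?_⟩
          simp only [Finset.mem_filter, Finset.mem_univ, true_and] at hi
          simp only [Finset.mem_insert, Finset.mem_singleton]
          rintro (rfl | rfl)
          · exact hi hoj
          · exact hi hok
        have hsd : ((Finset.univ.filter fun i => a i ≠ b i) \ ({j, k} : Finset (Fin n))).card =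
            (Finset.univ.filter fun i => a i ≠ b i).card - 2 := by
          rw [Finset.card_sdiff_of_subset hjk_sub, Finset.card_pair hjk]
        -- the difference set minus the stars is nonempty
        have hne : ((Finset.univ.filter fun i => a i ≠ b i) \ ({j, k} : Finset (Fin n))).Nonempty := by
          have hEDcard : (Finset.univ.filter fun i => eWord a i ≠ eWord b i).card =
              (Finset.univ.filter fun i => a i ≠ b i).card := by rw [hED]
          rw [← Finset.card_pos, hsd]
          omega
        obtain ⟨i, hi⟩ := hne
        rw [Finset.mem_sdiff] at hi
        obtain ⟨hi1, hi2⟩ := hi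
        simp only [Finset.mem_filter, Finset.mem_univ, true_and] at hi1
        simp only [Finset.mem_insert, Finset.mem_singleton, not_or] at hi2
        have hone : oWord a i ≠ oWord b i :=
          (ptwise hj hk (oW_sat hj) (oW_sat hk) hi2.1 hi2.2).mpr hi1
        have ho4 := hodist (oWord a) (Finset.mem_image_of_mem _ ha') (oWord b)
          (Finset.mem_image_of_mem _ hb') (fun h => hone (congrFun h i))
        have hOcard := Finset.card_le_card hOsub
        rw [← hammingDist_filter] at hOcard
        omega
    refine ⟨?_, hdist5⟩
    rw [← hecard, Finset.card_image_of_injOn (fun a ha b hb h => einj a ha b hb h)]
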